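/- arXiv:1809.07200 — 3 statements merged into one kernel-verified Lean document; each statement's English description precedes it below -/
import Mathlib

section
/- (Consequence of the Brelot–Choquet theorem, answering Problem 3.25.) There is no nonzero harmonic polynomial in three real variables divisible by x₁⁴ + x₂⁴ + x₃⁴: if P ∈ ℝ[x₁, x₂, x₃] satisfies ∂²P/∂x₁² + ∂²P/∂x₂² + ∂²P/∂x₃² = 0 (as a polynomial identity) and (x₁⁴ + x₂⁴ + x₃⁴) divides P in ℝ[x₁, x₂, x₃], then P = 0. -/
/-!
For the Gaussian weight, integration by parts reads `∫ ∂ᵢf · e^{-|x|²} = 2 ∫ xᵢ f · e^{-|x|²}`.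
Combined with Euler's identity `∑ xᵢ ∂ᵢq = k q` for `q` homogeneous of degree `k`, it shows by
induction on `k` that a harmonic polynomial, homogeneous of degree `n > k`, is Gaussian-orthogonal
to `q`. If `S = x₁⁴ + x₂⁴ + x₃⁴` and `S Q` is harmonic then, since the Laplacian lowers degrees
by exactly two, `S Q_k` is harmonic for every homogeneous component `Q_k` of `Q`;
hence `∫ S Q_k² e^{-|x|²} = 0`, which forces `Q_k = 0` because `S ≥ 0`.
-/

open MvPolynomial MeasureTheory

noncomputable def gaussMoment (a : ℕ) : ℝ := ∫ x : ℝ, x ^ a * Real.exp (-x ^ 2)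

lemma integrable_pow_mul_exp_neg_sq (a : ℕ) :
    Integrable fun x : ℝ => x ^ a * Real.exp (-x ^ 2) := by
  simpa [Real.rpow_natCast] using integrable_rpow_mul_exp_neg_mul_sq (b := 1) one_pos
    (s := a) (by linarith [a.cast_nonneg (α := ℝ)])

/-- Integration by parts against `exp (-x ^ 2)`; for `a = 0` it says `gaussMoment 1 = 0`. -/
lemma natCast_mul_gaussMoment_sub_one (a : ℕ) :
    a * gaussMoment (a - 1) = 2 * gaussMoment (a + 1) := by
  have hderiv : ∀ x : ℝ, HasDerivAt (fun x => x ^ a * Real.exp (-x ^ 2))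
      (a * (x ^ (a - 1) * Real.exp (-x ^ 2)) - 2 * (x ^ (a + 1) * Real.exp (-x ^ 2))) x := by
    intro x
    refine ((hasDerivAt_pow a x).mul (hasDerivAt_pow 2 x).neg.exp).congr_deriv ?_
    rcases a with _ | a <;> simp <;> ring
  have h := integral_eq_zero_of_hasDerivAt_of_integrable hderiv
    (((integrable_pow_mul_exp_neg_sq _).const_mul _).sub
      ((integrable_pow_mul_exp_neg_sq _).const_mul _))
    (integrable_pow_mul_exp_neg_sq a)
  rw [integral_sub ((integrable_pow_mul_exp_neg_sq _).const_mul _)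
    ((integrable_pow_mul_exp_neg_sq _).const_mul _), integral_const_mul, integral_const_mul] at h
  unfold gaussMoment
  linarith

namespace MvPolynomial

variable {σ R : Type*}

theorem pderiv_pderiv_comm [CommRing R] (i j : σ) (f : MvPolynomial σ R) :
    pderiv i (pderiv j f) = pderiv j (pderiv i f) := by
  -- The commutator of two derivations is a derivation, and this one kills every `X k`.
  have : ⁅pderiv (R := R) i, pderiv (R := R) j⁆ = 0 := by
    ext k : 1
    classical
    simp [Derivation.commutator_apply, Pi.single_apply, apply_ite]
  simpa [Derivation.commutator_apply, sub_eq_zero] using congr($this f)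

theorem homogeneousComponent_pderiv [CommSemiring R] (n : ℕ) (i : σ) (f : MvPolynomial σ R) :
    homogeneousComponent n (pderiv i f) = pderiv i (homogeneousComponent (n + 1) f) := by
  induction f using MvPolynomial.induction_on' with
  | add p q hp hq => simp only [map_add, hp, hq]
  | monomial d c =>
    rw [pderiv_monomial, homogeneousComponent_of_mem (isHomogeneous_monomial _ rfl),
      homogeneousComponent_of_mem (isHomogeneous_monomial _ rfl)]
    by_cases hdi : d i = 0
    · split_ifs <;> simp [hdi]
    have hdeg : d.degree = (d - Finsupp.single i 1).degree + 1 := by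
      conv_lhs => rw [← Finsupp.sub_add_single_one_cancel hdi]
      rw [map_add, Finsupp.degree_single]
    split_ifs <;> first | rfl | (exfalso; omega) | simp

theorem homogeneousComponent_mul_of_isHomogeneous [CommSemiring R] {m : ℕ} {g : MvPolynomial σ R}
    (hg : g.IsHomogeneous m) (n : ℕ) (f : MvPolynomial σ R) :
    homogeneousComponent (m + n) (g * f) = g * homogeneousComponent n f := by
  induction f using MvPolynomial.induction_on' with
  | add p q hp hq => simp only [mul_add, map_add, hp, hq]
  | monomial d c =>
    rw [homogeneousComponent_of_mem (hg.mul (isHomogeneous_monomial c rfl)),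
      homogeneousComponent_of_mem (isHomogeneous_monomial _ rfl)]
    split_ifs <;> first | rfl | (exfalso; omega) | simp

variable [Fintype σ]

noncomputable def laplacian [CommSemiring R] : MvPolynomial σ R →ₗ[R] MvPolynomial σ R :=
  ∑ i, (pderiv i).toLinearMap ∘ₗ (pderiv i).toLinearMap

theorem laplacian_apply [CommSemiring R] (f : MvPolynomial σ R) :
    laplacian f = ∑ i, pderiv i (pderiv i f) := by
  simp [laplacian]

theorem laplacian_pderiv [CommRing R] (i : σ) (f : MvPolynomial σ R) :
    laplacian (pderiv i f) = pderiv i (laplacian f) := by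
  simp only [laplacian_apply, map_sum, pderiv_pderiv_comm i]

theorem homogeneousComponent_laplacian [CommSemiring R] (n : ℕ) (f : MvPolynomial σ R) :
    homogeneousComponent n (laplacian f) = laplacian (homogeneousComponent (n + 2) f) := by
  simp only [laplacian_apply, map_sum, homogeneousComponent_pderiv]

end MvPolynomial

section GaussIntegral

variable {σ : Type*} [Fintype σ]

theorem eval_monomial_mul_exp_neg_sum_sq (d : σ →₀ ℕ) (c : ℝ) (x : σ → ℝ) :
    eval x (monomial d c) * Real.exp (-∑ i, x i ^ 2) =
      c * ∏ i, x i ^ d i * Real.exp (-x i ^ 2) := by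
  rw [eval_monomial, Finsupp.prod_fintype _ _ fun i => pow_zero _, Finset.prod_mul_distrib,
    ← Real.exp_sum, Finset.sum_neg_distrib, mul_assoc]

theorem integrable_eval_mul_exp_neg_sum_sq (f : MvPolynomial σ ℝ) :
    Integrable fun x : σ → ℝ => eval x f * Real.exp (-∑ i, x i ^ 2) := by
  induction f using MvPolynomial.induction_on' with
  | monomial d c =>
    simp_rw [eval_monomial_mul_exp_neg_sum_sq]
    exact (Integrable.fintype_prod fun i => integrable_pow_mul_exp_neg_sq (d i)).const_mul c
  | add p q hp hq =>
    simp only [eval_add, add_mul]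
    exact hp.add hq

variable (σ) in
noncomputable def gaussIntegral : MvPolynomial σ ℝ →ₗ[ℝ] ℝ where
  toFun f := ∫ x : σ → ℝ, eval x f * Real.exp (-∑ i, x i ^ 2)
  map_add' f g := by
    simp only [eval_add, add_mul]
    exact integral_add (integrable_eval_mul_exp_neg_sum_sq f)
      (integrable_eval_mul_exp_neg_sum_sq g)
  map_smul' c f := by
    simp only [smul_eval, mul_assoc, integral_const_mul, RingHom.id_apply, smul_eq_mul]

theorem gaussIntegral_monomial (d : σ →₀ ℕ) (c : ℝ) :
    gaussIntegral σ (monomial d c) = c * ∏ i, gaussMoment (d i) := by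
  change ∫ x : σ → ℝ, _ = _
  simp_rw [eval_monomial_mul_exp_neg_sum_sq]
  rw [integral_const_mul,
    integral_fintype_prod_volume_eq_prod fun i (t : ℝ) => t ^ d i * Real.exp (-t ^ 2)]
  rfl

theorem gaussIntegral_pderiv (i : σ) (f : MvPolynomial σ ℝ) :
    gaussIntegral σ (pderiv i f) = 2 * gaussIntegral σ (X i * f) := by
  induction f using MvPolynomial.induction_on' with
  | add p q hp hq => simp only [map_add, mul_add, hp, hq]
  | monomial d c =>
    classical
    have prod_eq (e : σ →₀ ℕ) (he : ∀ j ≠ i, e j = d j) :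
        ∏ j, gaussMoment (e j) =
          gaussMoment (e i) * ∏ j ∈ Finset.univ.erase i, gaussMoment (d j) := by
      rw [← Finset.mul_prod_erase _ _ (Finset.mem_univ i)]
      exact congrArg _ (Finset.prod_congr rfl fun j hj => by rw [he j (Finset.ne_of_mem_erase hj)])
    rw [pderiv_monomial, X, monomial_mul, one_mul, gaussIntegral_monomial, gaussIntegral_monomial,
      prod_eq _ fun j hj => by simp [hj.symm],
      prod_eq _ fun j hj => by simp [hj.symm]]
    simp only [Finsupp.coe_tsub, Finsupp.coe_add, Pi.sub_apply, Pi.add_apply,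
      Finsupp.single_eq_same, add_comm 1 (d i)]
    linear_combination (c * ∏ j ∈ Finset.univ.erase i, gaussMoment (d j)) *
      natCast_mul_gaussMoment_sub_one (d i)

theorem gaussIntegral_pos {f : MvPolynomial σ ℝ} (hf : f ≠ 0) (hf_nonneg : ∀ x, 0 ≤ eval x f) :
    0 < gaussIntegral σ f := by
  obtain ⟨x₀, hx₀⟩ : ∃ x, eval x f ≠ 0 := by
    by_contra! h
    exact hf (MvPolynomial.funext fun x => by simpa using h x)
  have hcont : Continuous fun x : σ → ℝ => eval x f * Real.exp (-∑ i, x i ^ 2) :=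
    (continuous_eval f).mul (by fun_prop)
  refine (integral_pos_iff_support_of_nonneg
    (fun x => mul_nonneg (hf_nonneg x) (Real.exp_pos _).le)
    (integrable_eval_mul_exp_neg_sum_sq f)).2 ?_
  exact hcont.isOpen_support.measure_pos volume ⟨x₀, mul_ne_zero hx₀ (Real.exp_pos _).ne'⟩

theorem gaussIntegral_laplacian {n : ℕ} {f : MvPolynomial σ ℝ} (hf : f.IsHomogeneous n) :
    gaussIntegral σ (laplacian f) = 2 * n * gaussIntegral σ f := by
  rw [laplacian_apply, map_sum]
  simp_rw [gaussIntegral_pderiv]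
  rw [← Finset.mul_sum, ← map_sum, hf.sum_X_mul_pderiv, map_nsmul, nsmul_eq_mul, mul_assoc]

theorem gaussIntegral_eq_zero_of_laplacian_eq_zero {n : ℕ} {P : MvPolynomial σ ℝ}
    (hP : laplacian P = 0) (hPn : P.IsHomogeneous n) (hn : 0 < n) : gaussIntegral σ P = 0 := by
  have h := gaussIntegral_laplacian hPn
  rw [hP, map_zero, eq_comm] at h
  have : (0 : ℝ) < n := by exact_mod_cast hn
  exact (mul_eq_zero.1 h).resolve_left (by positivity)

theorem gaussIntegral_mul_eq_zero_of_laplacian_eq_zero {n k : ℕ} {P q : MvPolynomial σ ℝ}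
    (hP : laplacian P = 0) (hPn : P.IsHomogeneous n) (hq : q.IsHomogeneous k) (hkn : k < n) :
    gaussIntegral σ (P * q) = 0 := by
  induction k using Nat.strong_induction_on generalizing n P q with
  | _ k ih =>
  rcases k.eq_zero_or_pos with rfl | hk
  · rw [totalDegree_eq_zero_iff_eq_C.1 ((totalDegree_zero_iff_isHomogeneous _).2 hq), mul_comm,
      ← smul_eq_C_mul, map_smul, gaussIntegral_eq_zero_of_laplacian_eq_zero hP hPn hkn, smul_zero]
  -- Euler's identity writes `k • q` as `∑ Xᵢ ∂ᵢq`, and integration by parts trades each `Xᵢ`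
  -- for a derivative, which lowers the degrees.
  have hterm (i : σ) : gaussIntegral σ (X i * (P * pderiv i q)) = 0 := by
    have h := gaussIntegral_pderiv i (P * pderiv i q)
    rw [pderiv_mul, map_add,
      ih (k - 1) (by omega) (by rw [laplacian_pderiv, hP, map_zero]) hPn.pderiv hq.pderiv
        (by omega),
      ih (k - 2) (by omega) hP hPn hq.pderiv.pderiv (by omega)] at h
    linarith
  have euler : ∑ i, X i * (P * pderiv i q) = k • (P * q) := by
    simp_rw [mul_left_comm (X _) P, ← Finset.mul_sum, hq.sum_X_mul_pderiv, mul_smul_comm]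
  have h := congrArg (gaussIntegral σ) euler
  rw [map_sum, map_nsmul, Finset.sum_eq_zero fun i _ => hterm i, eq_comm] at h
  exact (smul_eq_zero.1 h).resolve_left hk.ne'

end GaussIntegral

/-- **Consequence of the Brelot–Choquet theorem** (answer to Problem 3.25): there is no
nonzero harmonic polynomial in three real variables divisible by `x₁⁴ + x₂⁴ + x₃⁴`. -/
theorem no_harmonic_polynomial_divisible_by_quartic
    (P : MvPolynomial (Fin 3) ℝ)
    (hharm : ∑ i : Fin 3, pderiv i (pderiv i P) = 0)
    (hdvd : (X 0 ^ 4 + X 1 ^ 4 + X 2 ^ 4 : MvPolynomial (Fin 3) ℝ) ∣ P) :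
    P = 0 := by
  obtain ⟨Q, rfl⟩ := hdvd
  set S : MvPolynomial (Fin 3) ℝ := X 0 ^ 4 + X 1 ^ 4 + X 2 ^ 4
  have hS : S.IsHomogeneous 4 :=
    ((isHomogeneous_X_pow _ _).add (isHomogeneous_X_pow _ _)).add (isHomogeneous_X_pow _ _)
  have hS_ne : S ≠ 0 := fun h => by
    have h₁ := congrArg (eval 1) h
    norm_num [S] at h₁
  by_contra hSQ
  obtain ⟨k, hk⟩ : ∃ k, homogeneousComponent k Q ≠ 0 := by
    by_contra! h
    exact hSQ (by rw [← sum_homogeneousComponent Q]; simp [h])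
  have hQk : (homogeneousComponent k Q).IsHomogeneous k := homogeneousComponent_isHomogeneous k Q
  have harm : laplacian (S * homogeneousComponent k Q) = 0 := by
    rw [← homogeneousComponent_mul_of_isHomogeneous hS, show 4 + k = k + 2 + 2 by ring,
      ← homogeneousComponent_laplacian, laplacian_apply, hharm, map_zero]
  refine (gaussIntegral_pos (mul_ne_zero (mul_ne_zero hS_ne hk) hk) fun x => ?_).ne'
    (gaussIntegral_mul_eq_zero_of_laplacian_eq_zero harm (hS.mul hQk) hQk (by omega))
  rw [mul_assoc, eval_mul, eval_mul]
  exact mul_nonneg (by simp only [S, map_add, map_pow, eval_X]; positivity) (mul_self_nonneg _)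
end

section
/- (Becker's univalence criterion, as stated in Update 6.15.) Let f be analytic on the open unit disc 𝔻 with f'(z) ≠ 0 for all z ∈ 𝔻, and suppose that (1 − |z|²)·|f''(z)| ≤ |f'(z)| for every z ∈ 𝔻, i.e. |f''(z)/f'(z)| ≤ 1/(1 − |z|²). Then f is univalent (injective) on 𝔻. -/
/-!
Becker's chain `F(t, z) = f(e⁻ᵗz) + (eᵗ - e⁻ᵗ) z f'(e⁻ᵗz)` starts at `F(0, ·) = f` and satisfies
the Loewner equation `∂ₜF = z ∂_zF · p` with `p = (1 - w)/(1 + w)`, where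
`w = (1 - e⁻²ᵗ) u f''(u)/f'(u)` at `u = e⁻ᵗz`. Becker's condition gives `|w| ≤ |z|`, so `Re p ≥ 0`.
Hence `F` is constant along the characteristics `z' = -z p`, which do not leave a closed disc
`|z| ≤ ρ` and, by uniqueness of solutions, never merge. A collision `f(a) = f(b)` with `a ≠ b` is
therefore transported to a collision of `F(t, ·)` on `|z| ≤ ρ` for arbitrarily large `t`. But on
that disc `e⁻ᵗF(t, ·)` differs from `z ↦ f'(0) z` by a map with Lipschitz constant `O(e⁻ᵗ)`, so
`F(t, ·)` is injective there once `t` is large.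
-/

open Metric Set Filter Function
open scoped NNReal

lemma one_add_ne_zero_of_norm_lt_one {w : ℂ} (hw : ‖w‖ < 1) : 1 + w ≠ 0 := by
  intro h
  rw [eq_neg_of_add_eq_zero_right h, norm_neg, norm_one] at hw
  exact lt_irrefl _ hw

lemma re_one_sub_div_one_add_nonneg {w : ℂ} (hw : ‖w‖ < 1) : 0 ≤ ((1 - w) / (1 + w)).re := by
  have hnormSq : Complex.normSq w ≤ 1 := by
    rw [Complex.normSq_eq_norm_sq]; nlinarith [norm_nonneg w]
  rw [Complex.div_re, ← add_div]
  apply div_nonneg _ (Complex.normSq_nonneg _)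
  simp only [Complex.sub_re, Complex.add_re, Complex.one_re, Complex.sub_im, Complex.add_im,
    Complex.one_im, Complex.normSq_apply] at hnormSq ⊢
  nlinarith

lemma norm_ofReal_mul {r : ℝ} (hr : 0 ≤ r) (z : ℂ) : ‖(r : ℂ) * z‖ = r * ‖z‖ := by
  rw [norm_mul, Complex.norm_real, Real.norm_of_nonneg hr]

lemma ofReal_mul_mem_closedBall {r : ℝ} (hr : r ∈ Icc 0 1) {ρ : ℝ} {z : ℂ}
    (hz : z ∈ closedBall 0 ρ) : (r : ℂ) * z ∈ closedBall 0 ρ := by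
  rw [mem_closedBall_zero_iff, norm_ofReal_mul hr.1] at *
  exact (mul_le_of_le_one_left (norm_nonneg z) hr.2).trans hz

lemma Real.exp_neg_mem_Icc {t : ℝ} (ht : 0 ≤ t) : Real.exp (-t) ∈ Icc 0 1 :=
  ⟨(Real.exp_pos _).le, Real.exp_le_one_iff.2 (neg_nonpos.2 ht)⟩

lemma ofReal_exp_mul_exp_neg (t : ℝ) : (Real.exp t : ℂ) * Real.exp (-t) = 1 := by
  rw [← Complex.ofReal_mul, ← Real.exp_add, add_neg_cancel, Real.exp_zero, Complex.ofReal_one]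

lemma antitoneOn_norm_of_hasDerivWithinAt_neg_mul {z p : ℝ → ℂ} {a b : ℝ}
    (hz : ∀ t ∈ Icc a b, HasDerivWithinAt z (-z t * p t) (Icc a b) t)
    (hp : ∀ t ∈ Icc a b, 0 ≤ (p t).re) : AntitoneOn (fun t ↦ ‖z t‖) (Icc a b) := by
  have hsq : AntitoneOn (fun t ↦ ‖z t‖ ^ 2) (Icc a b) := by
    refine antitoneOn_of_hasDerivWithinAt_nonpos (convex_Icc a b)
      (fun t ht ↦ (hz t ht).continuousWithinAt.norm.pow 2)
      (fun t ht ↦ ((hz t (interior_subset ht)).norm_sq).mono interior_subset) fun t ht ↦ ?_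
    have hinner : inner ℝ (z t) (-z t * p t) = -‖z t‖ ^ 2 * (p t).re := by
      rw [Complex.inner, neg_mul, neg_mul, mul_comm (z t), mul_assoc, Complex.mul_conj,
        Complex.neg_re, Complex.re_mul_ofReal, Complex.normSq_eq_norm_sq]
      ring
    rw [hinner]
    nlinarith [hp t (interior_subset ht), sq_nonneg ‖z t‖]
  exact fun s hs t ht hst ↦ (pow_le_pow_iff_left₀ (norm_nonneg _) (norm_nonneg _)
    two_ne_zero).1 (hsq hs ht hst)

theorem IsPicardLindelof.exists_eq_forall_mem_Icc_mem_closedBall_hasDerivWithinAt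
    {E : Type*} [NormedAddCommGroup E] [NormedSpace ℝ E] [CompleteSpace E]
    {v : ℝ → E → E} {tmin tmax : ℝ} {t₀ : Icc tmin tmax} {x₀ x : E} {a r L K : ℝ≥0}
    (hv : IsPicardLindelof v t₀ x₀ a r L K) (hx : x ∈ closedBall x₀ r) :
    ∃ α : ℝ → E, α t₀ = x ∧ ∀ t ∈ Icc tmin tmax,
      α t ∈ closedBall x₀ a ∧ HasDerivWithinAt α (v t (α t)) (Icc tmin tmax) t := by
  obtain ⟨α, hα⟩ := ODE.FunSpace.exists_isFixedPt_next hv hx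
  refine ⟨α.compProj, by rw [ODE.FunSpace.compProj_val, ← hα, ODE.FunSpace.next_apply₀],
    fun t ht ↦ ⟨α.compProj_mem_closedBall hv.mul_max_le, ?_⟩⟩
  apply ODE.hasDerivWithinAt_picard_Icc t₀.2 hv.continuousOn_uncurry
    α.continuous_compProj.continuousOn (fun _ _ ↦ α.compProj_mem_closedBall hv.mul_max_le)
    x ht |>.congr_of_mem _ ht
  intro t' ht'
  nth_rw 1 [← hα]
  rw [ODE.FunSpace.compProj_of_mem ht', ODE.FunSpace.next_apply]

theorem ContDiffOn.exists_lipschitzOnWith_slice {E F G : Type*} [NormedAddCommGroup E]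
    [NormedSpace ℝ E] [NormedAddCommGroup F] [NormedSpace ℝ F] [NormedAddCommGroup G]
    [NormedSpace ℝ G] {φ : E × F → G} {s : Set E} {t : Set F}
    (hφ : ContDiffOn ℝ 1 φ (s ×ˢ t)) (hs : Convex ℝ s) (hs' : IsCompact s) (ht : Convex ℝ t)
    (ht' : IsCompact t) : ∃ K, ∀ x ∈ s, LipschitzOnWith K (fun y ↦ φ (x, y)) t := by
  obtain ⟨K, hK⟩ := hφ.exists_lipschitzOnWith one_ne_zero (hs.prod ht) (hs'.prod ht')
  refine ⟨K, fun x hx ↦ ?_⟩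
  have := hK.comp (LipschitzWith.prodMk_left x).lipschitzOnWith fun y hy ↦ mk_mem_prod hx hy
  rwa [mul_one] at this

lemma DifferentiableOn.exists_lipschitzOnWith_closedBall {φ : ℂ → ℂ}
    (hφ : DifferentiableOn ℂ φ (ball 0 1)) {ρ : ℝ} (hρ : ρ < 1) :
    ∃ K, LipschitzOnWith K φ (closedBall 0 ρ) :=
  (((hφ.contDiffOn (n := 1) isOpen_ball).restrict_scalars ℝ).mono
    (closedBall_subset_ball hρ)).exists_lipschitzOnWith one_ne_zero (convex_closedBall _ _)
    (isCompact_closedBall _ _)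

lemma LipschitzOnWith.norm_mul_comp_sub_mul_comp_sub_le {φ : ℂ → ℂ} {K : ℝ≥0} {ρ : ℝ}
    (hφ : LipschitzOnWith K φ (closedBall 0 ρ)) (hρ : ρ ≤ 1) {x y : ℂ}
    (hx : x ∈ closedBall 0 ρ) (hy : y ∈ closedBall 0 ρ) {r : ℝ} (hr : r ∈ Icc 0 1) :
    ‖x * φ (r * x) - y * φ (r * y) - φ 0 * (x - y)‖ ≤ 2 * K * r * ‖x - y‖ := by
  have h0 : (0 : ℂ) ∈ closedBall 0 ρ := mem_closedBall_self (dist_nonneg.trans hx)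
  have hx0 : ‖φ (r * x) - φ 0‖ ≤ K * r := by
    calc ‖φ (r * x) - φ 0‖ ≤ K * ‖(r : ℂ) * x - 0‖ :=
          hφ.norm_sub_le (ofReal_mul_mem_closedBall hr hx) h0
      _ ≤ K * r := by
        rw [sub_zero, norm_ofReal_mul hr.1]
        gcongr
        exact mul_le_of_le_one_right hr.1 ((mem_closedBall_zero_iff.1 hx).trans hρ)
  have hxy : ‖φ (r * x) - φ (r * y)‖ ≤ K * (r * ‖x - y‖) := by
    calc ‖φ (r * x) - φ (r * y)‖ ≤ K * ‖(r : ℂ) * x - r * y‖ :=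
          hφ.norm_sub_le (ofReal_mul_mem_closedBall hr hx) (ofReal_mul_mem_closedBall hr hy)
      _ = K * (r * ‖x - y‖) := by rw [← mul_sub, norm_ofReal_mul hr.1]
  calc ‖x * φ (r * x) - y * φ (r * y) - φ 0 * (x - y)‖
      = ‖(x - y) * (φ (r * x) - φ 0) + y * (φ (r * x) - φ (r * y))‖ := by ring_nf
    _ ≤ ‖x - y‖ * ‖φ (r * x) - φ 0‖ + ‖y‖ * ‖φ (r * x) - φ (r * y)‖ := by
      rw [← norm_mul, ← norm_mul]; exact norm_add_le _ _
    _ ≤ ‖x - y‖ * (K * r) + 1 * (K * (r * ‖x - y‖)) :=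
      add_le_add (mul_le_mul_of_nonneg_left hx0 (norm_nonneg _))
        (mul_le_mul ((mem_closedBall_zero_iff.1 hy).trans hρ) hxy (norm_nonneg _) zero_le_one)
    _ = 2 * K * r * ‖x - y‖ := by ring

def BeckerCondition (f : ℂ → ℂ) : Prop :=
  ∀ z ∈ ball (0 : ℂ) 1, (1 - ‖z‖ ^ 2) * ‖deriv (deriv f) z‖ ≤ ‖deriv f z‖

noncomputable def beckerChain (f : ℂ → ℂ) (t : ℝ) (z : ℂ) : ℂ :=
  f (Real.exp (-t) * z) + (Real.exp t - Real.exp (-t)) * z * deriv f (Real.exp (-t) * z)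

/-- Time enters through `r = e⁻ᵗ ∈ [0, 1]`, so that bounds uniform in time follow from
compactness of `[0, 1] × closedBall 0 R`. -/
noncomputable def beckerSchwarz (f : ℂ → ℂ) (r : ℝ) (z : ℂ) : ℂ :=
  (1 - r ^ 2) * (r * z) * (deriv (deriv f) (r * z) / deriv f (r * z))

noncomputable def beckerField (f : ℂ → ℂ) (r : ℝ) (z : ℂ) : ℂ :=
  -z * ((1 - beckerSchwarz f r z) / (1 + beckerSchwarz f r z))

def IsBeckerCurveOn (f : ℂ → ℂ) (R a b : ℝ) (z : ℝ → ℂ) : Prop :=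
  ∀ t ∈ Icc a b, z t ∈ closedBall 0 R ∧
    HasDerivWithinAt z (beckerField f (Real.exp (-t)) (z t)) (Icc a b) t

section Becker

variable {f : ℂ → ℂ}

@[simp]
lemma beckerChain_zero : beckerChain f 0 = f := by
  ext z
  simp [beckerChain]

lemma HasDerivWithinAt.beckerChain (hf : DifferentiableOn ℂ f (ball 0 1)) {z : ℝ → ℂ}
    {z' : ℂ} {s : Set ℝ} {t : ℝ} (hz : HasDerivWithinAt z z' s t)
    (hu : (Real.exp (-t) : ℂ) * z t ∈ ball 0 1) :
    HasDerivWithinAt (fun τ ↦ beckerChain f τ (z τ))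
      (Real.exp t * deriv f (Real.exp (-t) * z t) * (z t + z') +
        (1 - Real.exp (-t) ^ 2) * z t * deriv (deriv f) (Real.exp (-t) * z t) * (z' - z t))
      s t := by
  have hm : HasDerivAt (fun τ : ℝ ↦ (Real.exp (-τ) : ℂ)) (-(Real.exp (-t) : ℂ)) t := by
    simpa using ((Real.hasDerivAt_exp (-t)).comp t (hasDerivAt_neg t)).ofReal_comp
  have hp : HasDerivAt (fun τ : ℝ ↦ (Real.exp τ : ℂ)) (Real.exp t) t :=
    (Real.hasDerivAt_exp t).ofReal_comp
  have hu' := hm.hasDerivWithinAt.mul hz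
  have h₁ := ((hf.differentiableAt (isOpen_ball.mem_nhds hu)).hasDerivAt).comp_hasDerivWithinAt
    t hu'
  have h₂ := (((hf.deriv isOpen_ball).differentiableAt
    (isOpen_ball.mem_nhds hu)).hasDerivAt).comp_hasDerivWithinAt t hu'
  refine (h₁.add (((hp.sub hm).hasDerivWithinAt.mul hz).mul h₂)).congr_deriv ?_
  simp only [Function.comp_apply, Pi.mul_apply, Pi.sub_apply]
  linear_combination (z t * (z' - z t) * deriv (deriv f) (Real.exp (-t) * z t)) *
    ofReal_exp_mul_exp_neg t

/-- The derivative from `HasDerivWithinAt.beckerChain` (with `r = e⁻ᵗ`, `r' = eᵗ`) vanishes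
along `beckerField`: this is the Loewner equation for `beckerChain`. -/
lemma beckerChain_flow_deriv_eq_zero {r r' : ℝ} (hr : (r' : ℂ) * r = 1) {z : ℂ}
    (hd : deriv f (r * z) ≠ 0) (hw : 1 + beckerSchwarz f r z ≠ 0) :
    r' * deriv f (r * z) * (z + beckerField f r z) +
      (1 - r ^ 2) * z * deriv (deriv f) (r * z) * (beckerField f r z - z) = 0 := by
  have hdw : deriv f (r * z) * beckerSchwarz f r z =
      (1 - r ^ 2) * (r * z) * deriv (deriv f) (r * z) := by
    rw [beckerSchwarz]; field_simp
  rw [beckerField]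
  field_simp
  linear_combination (2 * z) * (r' * hdw) + 2 * z ^ 2 * deriv (deriv f) (r * z) * (1 - r ^ 2) * hr

lemma norm_beckerSchwarz_le (hb : BeckerCondition f) {r : ℝ} (hr : r ∈ Icc 0 1) {z : ℂ}
    (hz : ‖z‖ < 1) : ‖beckerSchwarz f r z‖ ≤ ‖z‖ := by
  have hu : ‖(r : ℂ) * z‖ = r * ‖z‖ := norm_ofReal_mul hr.1 z
  have hrz : r * ‖z‖ ≤ ‖z‖ := mul_le_of_le_one_left (norm_nonneg z) hr.2
  have hquot : (1 - r ^ 2) * ‖deriv (deriv f) (r * z)‖ / ‖deriv f (r * z)‖ ≤ 1 := by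
    refine div_le_one_of_le₀ (le_trans ?_ (hb _ (mem_ball_zero_iff.2 (by linarith))))
      (norm_nonneg _)
    gcongr
    nlinarith [mul_le_of_le_one_right hr.1 hz.le, norm_nonneg ((r : ℂ) * z)]
  calc ‖beckerSchwarz f r z‖
      = ‖(r : ℂ) * z‖ * ((1 - r ^ 2) * ‖deriv (deriv f) (r * z)‖ / ‖deriv f (r * z)‖) := by
        rw [beckerSchwarz, norm_mul, norm_mul, norm_div, ← Complex.ofReal_pow,
          ← Complex.ofReal_one, ← Complex.ofReal_sub, Complex.norm_real,
          Real.norm_of_nonneg (by nlinarith [hr.1, hr.2])]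
        ring
    _ ≤ ‖(r : ℂ) * z‖ * 1 := by gcongr
    _ ≤ ‖z‖ := by rw [mul_one, hu]; exact hrz

lemma contDiffOn_beckerField (hf : DifferentiableOn ℂ f (ball 0 1))
    (hf' : ∀ z ∈ ball (0 : ℂ) 1, deriv f z ≠ 0) (hb : BeckerCondition f) {R : ℝ} (hR : R < 1) :
    ContDiffOn ℝ 1 (uncurry (beckerField f)) (Icc 0 1 ×ˢ closedBall 0 R) := by
  have hmaps : MapsTo (fun p : ℝ × ℂ ↦ (p.1 : ℂ) * p.2) (Icc 0 1 ×ˢ closedBall 0 R)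
      (ball 0 1) := fun p hp ↦
    closedBall_subset_ball hR (ofReal_mul_mem_closedBall hp.1 hp.2)
  have hquot : ContDiffOn ℝ 1 (deriv (deriv f) / deriv f) (ball 0 1) := by
    have h₁ := hf.deriv isOpen_ball
    exact (((h₁.deriv isOpen_ball).contDiffOn isOpen_ball).div (h₁.contDiffOn isOpen_ball)
      hf').restrict_scalars ℝ
  have hmul : ContDiff ℝ 1 (fun p : ℝ × ℂ ↦ (p.1 : ℂ) * p.2) :=
    (Complex.ofRealCLM.contDiff.comp contDiff_fst).mul contDiff_snd
  have hw : ContDiffOn ℝ 1 (uncurry (beckerSchwarz f)) (Icc 0 1 ×ˢ closedBall 0 R) :=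
    ((((contDiff_const (c := (1 : ℂ))).sub ((Complex.ofRealCLM.contDiff.comp
      contDiff_fst).pow 2)).mul hmul).contDiffOn.mul
      (hquot.comp hmul.contDiffOn hmaps)).congr fun p _ ↦ rfl
  have hne : ∀ p ∈ Icc 0 1 ×ˢ closedBall (0 : ℂ) R, 1 + uncurry (beckerSchwarz f) p ≠ 0 :=
    fun p hp ↦ by
      have hp1 := (mem_closedBall_zero_iff.1 hp.2).trans_lt hR
      exact one_add_ne_zero_of_norm_lt_one ((norm_beckerSchwarz_le hb hp.1 hp1).trans_lt hp1)
  exact (contDiff_snd.neg.contDiffOn.mul (((contDiffOn_const (c := (1 : ℂ))).sub hw).mul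
    ((contDiffOn_const.add hw).inv hne))).congr fun p _ ↦ rfl

lemma exists_lipschitzOnWith_beckerField (hf : DifferentiableOn ℂ f (ball 0 1))
    (hf' : ∀ z ∈ ball (0 : ℂ) 1, deriv f z ≠ 0) (hb : BeckerCondition f) {R : ℝ} (hR : R < 1) :
    ∃ K, ∀ r ∈ Icc 0 1, LipschitzOnWith K (beckerField f r) (closedBall 0 R) :=
  (contDiffOn_beckerField hf hf' hb hR).exists_lipschitzOnWith_slice (convex_Icc 0 1)
    isCompact_Icc (convex_closedBall 0 R) (isCompact_closedBall 0 R)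

lemma exists_isBeckerCurveOn (hf : DifferentiableOn ℂ f (ball 0 1))
    (hf' : ∀ z ∈ ball (0 : ℂ) 1, deriv f z ≠ 0) (hb : BeckerCondition f) {ρ R : ℝ}
    (hρ : 0 ≤ ρ) (hρR : ρ < R) (hR : R < 1) :
    ∃ h > 0, ∀ s ≥ 0, ∀ x ∈ closedBall (0 : ℂ) ρ,
      ∃ z : ℝ → ℂ, z s = x ∧ IsBeckerCurveOn f R s (s + h) z := by
  have hG := contDiffOn_beckerField hf hf' hb hR
  obtain ⟨K, hK⟩ := exists_lipschitzOnWith_beckerField hf hf' hb hR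
  obtain ⟨L, hL⟩ :=
    (isCompact_Icc.prod (isCompact_closedBall (0 : ℂ) R)).exists_bound_of_continuousOn
      hG.continuousOn
  lift ρ to ℝ≥0 using hρ
  lift R to ℝ≥0 using ρ.2.trans hρR.le
  set L' : ℝ≥0 := L.toNNReal + 1
  have hL' : 0 < (L' : ℝ) := by positivity
  have hh : 0 < (R - ρ) / (L' : ℝ) := div_pos (sub_pos.2 hρR) hL'
  refine ⟨(R - ρ) / L', hh, fun s hs x hx ↦ ?_⟩
  have hr : ∀ t ∈ Icc s (s + (R - ρ) / L'), Real.exp (-t) ∈ Icc 0 1 :=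
    fun t ht ↦ Real.exp_neg_mem_Icc (hs.trans ht.1)
  have hpl : IsPicardLindelof (fun t ↦ beckerField f (Real.exp (-t)))
      (⟨s, left_mem_Icc.2 (by linarith)⟩ : Icc s (s + (R - ρ) / L')) 0 R ρ L' K :=
    { lipschitzOnWith := fun t ht ↦ hK _ (hr t ht)
      continuousOn := fun z hz ↦ hG.continuousOn.comp
        (by fun_prop : Continuous fun t : ℝ ↦ (Real.exp (-t), z)).continuousOn
        fun t ht ↦ ⟨hr t ht, hz⟩
      norm_le := fun t ht z hz ↦ (hL (_, z) ⟨hr t ht, hz⟩).trans <| by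
        simp only [L', NNReal.coe_add, NNReal.coe_one]
        linarith [Real.le_coe_toNNReal L]
      mul_max_le := by
        change (L' : ℝ) * max (s + (R - ρ) / L' - s) (s - s) ≤ R - ρ
        rw [add_sub_cancel_left, sub_self, max_eq_left hh.le, mul_div_cancel₀ _ hL'.ne'] }
  exact hpl.exists_eq_forall_mem_Icc_mem_closedBall_hasDerivWithinAt hx

namespace IsBeckerCurveOn

variable {R a b : ℝ} {z : ℝ → ℂ}

lemma continuousOn (hz : IsBeckerCurveOn f R a b z) : ContinuousOn z (Icc a b) :=
  fun t ht ↦ (hz t ht).2.continuousWithinAt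

lemma norm_le (hb : BeckerCondition f) (hR : R < 1) (ha : 0 ≤ a)
    (hz : IsBeckerCurveOn f R a b z) {t : ℝ} (ht : t ∈ Icc a b) : ‖z t‖ ≤ ‖z a‖ := by
  refine antitoneOn_norm_of_hasDerivWithinAt_neg_mul (fun t ht ↦ (hz t ht).2)
    (fun t ht ↦ re_one_sub_div_one_add_nonneg ?_) (left_mem_Icc.2 (ht.1.trans ht.2)) ht ht.1
  have hzt := (mem_closedBall_zero_iff.1 (hz t ht).1).trans_lt hR
  exact (norm_beckerSchwarz_le hb (Real.exp_neg_mem_Icc (ha.trans ht.1)) hzt).trans_lt hzt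

lemma beckerChain_eq (hf : DifferentiableOn ℂ f (ball 0 1))
    (hf' : ∀ z ∈ ball (0 : ℂ) 1, deriv f z ≠ 0) (hb : BeckerCondition f) (hR : R < 1)
    (ha : 0 ≤ a) (hab : a ≤ b) (hz : IsBeckerCurveOn f R a b z) :
    beckerChain f b (z b) = beckerChain f a (z a) := by
  have hderiv : ∀ t ∈ Icc a b,
      HasDerivWithinAt (fun τ ↦ beckerChain f τ (z τ)) 0 (Icc a b) t := by
    intro t ht
    obtain ⟨hzR, hz'⟩ := hz t ht
    have hz1 : ‖z t‖ < 1 := (mem_closedBall_zero_iff.1 hzR).trans_lt hR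
    have hr := Real.exp_neg_mem_Icc (ha.trans ht.1)
    have hu : (Real.exp (-t) : ℂ) * z t ∈ ball 0 1 :=
      closedBall_subset_ball hR (ofReal_mul_mem_closedBall hr hzR)
    refine (hz'.beckerChain hf hu).congr_deriv ?_
    exact beckerChain_flow_deriv_eq_zero (ofReal_exp_mul_exp_neg t) (hf' _ hu)
      (one_add_ne_zero_of_norm_lt_one ((norm_beckerSchwarz_le hb hr hz1).trans_lt hz1))
  exact constant_of_has_deriv_right_zero (fun t ht ↦ (hderiv t ht).continuousWithinAt)
    (fun t ht ↦ (hderiv t (Ico_subset_Icc_self ht)).mono_of_mem_nhdsWithin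
      (Icc_mem_nhdsGE_of_mem ht)) b (right_mem_Icc.2 hab)

lemma eqOn (hf : DifferentiableOn ℂ f (ball 0 1))
    (hf' : ∀ z ∈ ball (0 : ℂ) 1, deriv f z ≠ 0) (hb : BeckerCondition f) (hR : R < 1)
    (ha : 0 ≤ a) {w : ℝ → ℂ} (hz : IsBeckerCurveOn f R a b z)
    (hw : IsBeckerCurveOn f R a b w) (hzw : z b = w b) : EqOn z w (Icc a b) := by
  obtain ⟨K, hK⟩ := exists_lipschitzOnWith_beckerField hf hf' hb hR
  have hIic : ∀ {u : ℝ → ℂ}, IsBeckerCurveOn f R a b u → ∀ t ∈ Ioc a b,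
      HasDerivWithinAt u (beckerField f (Real.exp (-t)) (u t)) (Iic t) t := fun hu t ht ↦
    (hu t (Ioc_subset_Icc_self ht)).2.mono_of_mem_nhdsWithin (Icc_mem_nhdsLE_of_mem ht)
  exact ODE_solution_unique_of_mem_Icc_left (s := fun _ ↦ closedBall 0 R)
    (fun t ht ↦ hK _ (Real.exp_neg_mem_Icc (ha.trans ht.1.le))) hz.continuousOn (hIic hz)
    (fun t ht ↦ (hz t (Ioc_subset_Icc_self ht)).1) hw.continuousOn (hIic hw)
    (fun t ht ↦ (hw t (Ioc_subset_Icc_self ht)).1) hzw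

end IsBeckerCurveOn

lemma exists_pos_forall_not_injOn_beckerChain_add (hf : DifferentiableOn ℂ f (ball 0 1))
    (hf' : ∀ z ∈ ball (0 : ℂ) 1, deriv f z ≠ 0) (hb : BeckerCondition f) {ρ : ℝ}
    (hρ : 0 ≤ ρ) (hρ1 : ρ < 1) :
    ∃ h > 0, ∀ s ≥ 0, ¬InjOn (beckerChain f s) (closedBall 0 ρ) →
      ¬InjOn (beckerChain f (s + h)) (closedBall 0 ρ) := by
  have hR : (1 + ρ) / 2 < 1 := by linarith
  obtain ⟨h, hh, hcurve⟩ := exists_isBeckerCurveOn hf hf' hb hρ (by linarith) hR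
  refine ⟨h, hh, fun s hs hnot hinj ↦ hnot fun x hx y hy hxy ↦ ?_⟩
  obtain ⟨zx, rfl, hzx⟩ := hcurve s hs x hx
  obtain ⟨zy, rfl, hzy⟩ := hcurve s hs y hy
  have hsh : s ≤ s + h := by linarith
  have hmem : ∀ {z : ℝ → ℂ}, IsBeckerCurveOn f ((1 + ρ) / 2) s (s + h) z →
      z s ∈ closedBall 0 ρ → z (s + h) ∈ closedBall 0 ρ := fun hz hzs ↦
    mem_closedBall_zero_iff.2 ((hz.norm_le hb hR hs (right_mem_Icc.2 hsh)).trans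
      (mem_closedBall_zero_iff.1 hzs))
  have hend : zx (s + h) = zy (s + h) := hinj (hmem hzx hx) (hmem hzy hy) (by
    rw [hzx.beckerChain_eq hf hf' hb hR hs hsh, hzy.beckerChain_eq hf hf' hb hR hs hsh, hxy])
  exact hzx.eqOn hf hf' hb hR hs hzy hend (left_mem_Icc.2 hsh)

lemma injOn_beckerChain_of_lipschitzOnWith {ρ : ℝ} (hρ : ρ ≤ 1) {K₁ K₂ : ℝ≥0}
    (hK₁ : LipschitzOnWith K₁ f (closedBall 0 ρ))
    (hK₂ : LipschitzOnWith K₂ (deriv f) (closedBall 0 ρ)) {t : ℝ} (ht : 0 ≤ t)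
    (hsmall : Real.exp (-t) * (‖deriv f 0‖ + 2 * K₂ + K₁) < ‖deriv f 0‖) :
    InjOn (beckerChain f t) (closedBall 0 ρ) := by
  intro x hx y hy hxy
  by_contra hne
  set c := ‖deriv f 0‖
  set r := Real.exp (-t)
  have hr : r ∈ Icc 0 1 := Real.exp_neg_mem_Icc ht
  have hδ : 0 < ‖x - y‖ := norm_pos_iff.2 (sub_ne_zero.2 hne)
  have hkey : ((1 - r ^ 2 : ℝ) : ℂ) * (x * deriv f (r * x) - y * deriv f (r * y)) =
      -(r * (f (r * x) - f (r * y))) := by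
    simp only [beckerChain] at hxy
    push_cast
    linear_combination r * hxy - (x * deriv f (r * x) - y * deriv f (r * y)) *
      ofReal_exp_mul_exp_neg t
  have hupper : (1 - r ^ 2) * ‖x * deriv f (r * x) - y * deriv f (r * y)‖ ≤
      r * (K₁ * (r * ‖x - y‖)) := by
    have h := congrArg norm hkey
    rw [norm_mul, norm_neg, norm_ofReal_mul hr.1, Complex.norm_real,
      Real.norm_of_nonneg (by nlinarith [hr.1, hr.2])] at h
    rw [h]
    gcongr
    calc ‖f (r * x) - f (r * y)‖ ≤ K₁ * ‖(r : ℂ) * x - r * y‖ :=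
          hK₁.norm_sub_le (ofReal_mul_mem_closedBall hr hx) (ofReal_mul_mem_closedBall hr hy)
      _ = K₁ * (r * ‖x - y‖) := by rw [← mul_sub, norm_ofReal_mul hr.1]
  have hlower : c * ‖x - y‖ - 2 * K₂ * r * ‖x - y‖ ≤
      ‖x * deriv f (r * x) - y * deriv f (r * y)‖ := by
    have h := hK₂.norm_mul_comp_sub_mul_comp_sub_le hρ hx hy hr
    have h' := norm_sub_norm_le (deriv f 0 * (x - y)) (x * deriv f (r * x) - y * deriv f (r * y))
    rw [norm_sub_rev (deriv f 0 * (x - y)), norm_mul] at h'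
    linarith
  have h₁ : (1 - r ^ 2) * (c - 2 * K₂ * r) * ‖x - y‖ ≤ K₁ * r ^ 2 * ‖x - y‖ := by
    nlinarith [mul_le_mul_of_nonneg_left hlower (by nlinarith [hr.1, hr.2] : 0 ≤ 1 - r ^ 2)]
  have h₂ := le_of_mul_le_mul_right h₁ hδ
  nlinarith [norm_nonneg (deriv f 0), mul_nonneg (mul_nonneg K₂.coe_nonneg hr.1) (sq_nonneg r),
    mul_nonneg (norm_nonneg (deriv f 0)) (mul_nonneg hr.1 (sub_nonneg.2 hr.2)),
    mul_nonneg K₁.coe_nonneg (mul_nonneg hr.1 (sub_nonneg.2 hr.2))]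

lemma eventually_injOn_beckerChain (hf : DifferentiableOn ℂ f (ball 0 1))
    (h0 : deriv f 0 ≠ 0) {ρ : ℝ} (hρ : ρ < 1) :
    ∀ᶠ t in atTop, InjOn (beckerChain f t) (closedBall 0 ρ) := by
  obtain ⟨K₁, hK₁⟩ := hf.exists_lipschitzOnWith_closedBall hρ
  obtain ⟨K₂, hK₂⟩ := (hf.deriv isOpen_ball).exists_lipschitzOnWith_closedBall hρ
  have hsmall : ∀ᶠ t in atTop, Real.exp (-t) * (‖deriv f 0‖ + 2 * K₂ + K₁) < ‖deriv f 0‖ :=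
    (Real.tendsto_exp_neg_atTop_nhds_zero.mul_const _).eventually
      (gt_mem_nhds (by rw [zero_mul]; exact norm_pos_iff.2 h0))
  filter_upwards [hsmall, eventually_ge_atTop 0] with t hsmall ht
  exact injOn_beckerChain_of_lipschitzOnWith hρ.le hK₁ hK₂ ht hsmall

lemma injOn_closedBall_of_beckerCondition (hf : DifferentiableOn ℂ f (ball 0 1))
    (hf' : ∀ z ∈ ball (0 : ℂ) 1, deriv f z ≠ 0) (hb : BeckerCondition f) {ρ : ℝ}
    (hρ : 0 ≤ ρ) (hρ1 : ρ < 1) : InjOn f (closedBall 0 ρ) := by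
  obtain ⟨h, hh, hstep⟩ := exists_pos_forall_not_injOn_beckerChain_add hf hf' hb hρ hρ1
  obtain ⟨T, hT⟩ :=
    eventually_atTop.1 (eventually_injOn_beckerChain hf (hf' 0 (mem_ball_self one_pos)) hρ1)
  obtain ⟨n, hn⟩ := exists_nat_ge (T / h)
  by_contra hnot
  have hcollision : ∀ k : ℕ, ¬InjOn (beckerChain f (k * h)) (closedBall 0 ρ) := by
    intro k
    induction k with
    | zero => simpa using hnot
    | succ k ih => simpa [add_mul] using hstep _ (mul_nonneg k.cast_nonneg hh.le) ih
  exact hcollision n (hT _ ((div_le_iff₀ hh).1 hn))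

end Becker

/-- **Becker's univalence criterion** (as stated in Update 6.15): if `f` is analytic on
the unit disc, `f' ≠ 0` there, and `(1 - |z|²)|f''(z)| ≤ |f'(z)|` for all `z` in the disc,
then `f` is univalent on the disc. -/
theorem becker_univalence_criterion
    (f : ℂ → ℂ)
    (hf : DifferentiableOn ℂ f (ball (0 : ℂ) 1))
    (hf' : ∀ z ∈ ball (0 : ℂ) 1, deriv f z ≠ 0)
    (hbecker : ∀ z ∈ ball (0 : ℂ) 1,
      (1 - ‖z‖ ^ 2) * ‖deriv (deriv f) z‖ ≤
        ‖deriv f z‖) :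
    Set.InjOn f (ball (0 : ℂ) 1) := by
  intro a ha b hb hab
  rw [mem_ball_zero_iff] at ha hb
  exact injOn_closedBall_of_beckerCondition hf hf' hbecker
    ((norm_nonneg a).trans (le_max_left _ _)) (max_lt ha hb)
    (mem_closedBall_zero_iff.2 (le_max_left _ _)) (mem_closedBall_zero_iff.2 (le_max_right _ _))
    hab
end

section
/- (Counterexample constructed in Update 9.3(a).) On the open unit disc 𝔻 define F₁(z) = 1 − z and F₂(z) = exp(−(1+z)/(1−z)), and set f₁ = F₁², f₂ = F₂², f = F₁·F₂. Then: (i) |f(z)| ≤ |f₁(z)| + |f₂(z)| for every z ∈ 𝔻; and (ii) there do not exist functions h₁, h₂, each analytic and bounded on 𝔻, such that f(z) = f₁(z)·h₁(z) + f₂(z)·h₂(z) for all z ∈ 𝔻. -/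
open Metric

/-- `F₁(z) = 1 - z`. -/
noncomputable def F₁ : ℂ → ℂ := fun z => 1 - z

/-- `F₂(z) = exp (-(1+z)/(1-z))`. -/
noncomputable def F₂ : ℂ → ℂ := fun z => Complex.exp (-(1 + z) / (1 - z))

/-!
Dividing `f = f₁ h₁ + f₂ h₂` by `f` gives `1 = F₁ h₁ / F₂ + F₂ h₂ / F₁` on the disc. In the
coordinate `w` of the right half-plane, `z = (w - 1) / (w + 1)`, one has `F₁ = 2 / (w + 1)` and
`F₂ = exp (-w)`, so `P = F₂ h₂ / F₁` satisfies `|P| ≲ |w + 1| e^{-Re w}` and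
`|1 - P| ≲ e^{Re w} / |w + 1|`. Hence `P` is bounded on the half-plane and, by Phragmén–Lindelöf,
decays like `e^{-Re w / 2}` there; but along every vertical line `P → 1`.
-/

open Filter Topology

theorem add_one_ne_zero_of_re_pos {w : ℂ} (hw : 0 < w.re) : w + 1 ≠ 0 := by
  intro h
  have := congrArg Complex.re h
  simp only [Complex.add_re, Complex.one_re, Complex.zero_re] at this
  linarith

theorem norm_le_max_of_norm_le_of_norm_one_sub_le {p : ℂ} {r s A B : ℝ} (hs : 0 < s)
    (hA : 0 ≤ A) (hB : 0 ≤ B) (hp : ‖p‖ ≤ A * (r / s)) (h1p : ‖1 - p‖ ≤ B * (s / r)) :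
    ‖p‖ ≤ max A (1 + B) := by
  rcases le_or_gt r s with hrs | hsr
  · calc ‖p‖ ≤ A * (r / s) := hp
      _ ≤ A := mul_le_of_le_one_right hA (div_le_one_of_le₀ hrs hs.le)
      _ ≤ max A (1 + B) := le_max_left _ _
  · have hr : 0 < r := hs.trans hsr
    calc ‖p‖ ≤ ‖(1 : ℂ)‖ + ‖1 - p‖ := norm_le_norm_add_norm_sub 1 p
      _ ≤ 1 + B := by
        rw [norm_one]
        gcongr
        calc ‖1 - p‖ ≤ B * (s / r) := h1p
          _ ≤ B := mul_le_of_le_one_right hB (div_le_one_of_le₀ hsr.le hr.le)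
      _ ≤ max A (1 + B) := le_max_right _ _

theorem tendsto_norm_mul_exp_half_mul_of_norm_le {P : ℂ → ℂ} {A : ℝ}
    (hP : ∀ w : ℂ, 0 < w.re → ‖P w‖ ≤ A * (‖w + 1‖ / Real.exp w.re)) :
    Tendsto (fun x : ℝ => ‖P x‖ * Real.exp (1 / 2 * x)) atTop (𝓝 0) := by
  have hlim : Tendsto (fun x : ℝ => A * ((x ^ 1 + x ^ 0) / Real.exp (1 / 2 * x))) atTop (𝓝 0) := by
    simpa using (((isLittleO_pow_exp_pos_mul_atTop 1 one_half_pos).add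
      (isLittleO_pow_exp_pos_mul_atTop 0 one_half_pos)).tendsto_div_nhds_zero).const_mul A
  refine squeeze_zero' (Eventually.of_forall fun x => by positivity) ?_ hlim
  filter_upwards [eventually_gt_atTop 0] with x hx
  have hnorm : ‖(x : ℂ) + 1‖ = x + 1 := by
    rw [← Complex.ofReal_one, ← Complex.ofReal_add, Complex.norm_of_nonneg (by linarith)]
  have hexp : Real.exp x = Real.exp (1 / 2 * x) * Real.exp (1 / 2 * x) := by
    rw [← Real.exp_add]; ring_nf
  calc ‖P x‖ * Real.exp (1 / 2 * x)
      ≤ A * ((x + 1) / Real.exp x) * Real.exp (1 / 2 * x) := by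
        gcongr
        simpa [hnorm] using hP x (by simpa using hx)
    _ = A * ((x ^ 1 + x ^ 0) / Real.exp (1 / 2 * x)) := by
        rw [hexp]; field_simp

theorem norm_mul_exp_le_of_norm_le_of_tendsto {P : ℂ → ℂ} {C c : ℝ}
    (hd : DifferentiableOn ℂ P {w | 0 < w.re}) (hC : ∀ w : ℂ, 0 < w.re → ‖P w‖ ≤ C)
    (hreal : Tendsto (fun x : ℝ => ‖P x‖ * Real.exp (c * x)) atTop (𝓝 0))
    {w : ℂ} (hw : 1 ≤ w.re) :
    ‖P w‖ * Real.exp (c * w.re) ≤ C * Real.exp c := by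
  -- Shifting by `1` makes `g` continuous up to the imaginary axis, where `P` need not be.
  set g : ℂ → ℂ := fun u => P (u + 1) * Complex.exp (c * (u + 1))
  have hnorm : ∀ u, ‖g u‖ = ‖P (u + 1)‖ * Real.exp (c * (u.re + 1)) := by
    simp [g, Complex.norm_exp]
  have hC0 : 0 ≤ C := (norm_nonneg _).trans (hC 1 (by simp))
  have hshift : Set.MapsTo (· + 1) {u : ℂ | -1 < u.re} {w | 0 < w.re} := fun u hu => by
    simp only [Set.mem_ofPred_eq, Complex.add_re, Complex.one_re] at hu ⊢
    linarith
  have hgd : DiffContOnCl ℂ g {u | 0 < u.re} := by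
    refine DifferentiableOn.diffContOnCl ?_
    rw [Complex.closure_setOfPred_lt_re]
    refine DifferentiableOn.mono ?_ fun u (hu : 0 ≤ u.re) => show -1 < u.re by linarith
    exact (hd.comp (differentiableOn_id.add_const 1) hshift).mul (by fun_prop)
  have hgrowth : ∃ a < (2 : ℝ), ∃ B, g =O[Bornology.cobounded ℂ ⊓ 𝓟 {u | 0 < u.re}]
      fun u => Real.exp (B * ‖u‖ ^ a) := by
    refine ⟨1, one_lt_two, |c|, Asymptotics.IsBigO.of_bound (C * Real.exp |c|) ?_⟩
    refine Eventually.filter_mono inf_le_right (eventually_principal.2 fun u hu => ?_)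
    have hexp : c * (u.re + 1) ≤ |c| + |c| * ‖u‖ := by
      calc c * (u.re + 1) ≤ |c| * |u.re + 1| := by rw [← abs_mul]; exact le_abs_self _
        _ ≤ |c| * (‖u‖ + 1) := by
          gcongr
          exact (abs_add_le _ _).trans (by simpa using Complex.abs_re_le_norm u)
        _ = |c| + |c| * ‖u‖ := by ring
    rw [hnorm, Real.rpow_one, Real.norm_of_nonneg (Real.exp_pos _).le, mul_assoc,
      ← Real.exp_add]
    exact mul_le_mul (hC _ (hshift (show -1 < u.re by linarith [show 0 < u.re from hu])))
      (Real.exp_le_exp.2 hexp) (Real.exp_pos _).le hC0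
  have hre : Tendsto (fun x : ℝ => g x) atTop (𝓝 0) := by
    rw [tendsto_zero_iff_norm_tendsto_zero]
    refine (hreal.comp (tendsto_atTop_add_const_right _ 1 tendsto_id)).congr fun x => ?_
    simp [hnorm]
  have him : ∀ y : ℝ, ‖g (y * Complex.I)‖ ≤ C * Real.exp c := fun y => by
    rw [hnorm]
    simpa using mul_le_mul_of_nonneg_right (hC (y * Complex.I + 1) (by simp))
      (Real.exp_pos c).le
  have := PhragmenLindelof.right_half_plane_of_tendsto_zero_on_real hgd hgrowth hre him
    (z := w - 1) (by rw [Complex.sub_re, Complex.one_re]; linarith)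
  simpa [hnorm] using this

theorem not_differentiableOn_re_pos_of_norm_le_of_norm_one_sub_le {P : ℂ → ℂ} {A B : ℝ}
    (hA : 0 ≤ A) (hB : 0 ≤ B)
    (hP : ∀ w : ℂ, 0 < w.re → ‖P w‖ ≤ A * (‖w + 1‖ / Real.exp w.re))
    (h1P : ∀ w : ℂ, 0 < w.re → ‖1 - P w‖ ≤ B * (Real.exp w.re / ‖w + 1‖)) :
    ¬ DifferentiableOn ℂ P {w | 0 < w.re} := by
  intro hd
  set C := max A (1 + B)
  have hdecay : ∀ w : ℂ, 1 ≤ w.re → ‖P w‖ * Real.exp (1 / 2 * w.re) ≤ C * Real.exp (1 / 2) :=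
    fun w hw => norm_mul_exp_le_of_norm_le_of_tendsto hd
      (fun w hw => norm_le_max_of_norm_le_of_norm_one_sub_le (Real.exp_pos _) hA hB (hP w hw)
        (h1P w hw))
      (tendsto_norm_mul_exp_half_mul_of_norm_le hP) hw
  obtain ⟨a, ha1, ha⟩ : ∃ a : ℝ, 1 ≤ a ∧ 2 * (C * Real.exp (1 / 2)) < Real.exp (1 / 2 * a) :=
    ((eventually_ge_atTop 1).and ((Real.tendsto_exp_atTop.comp
      (tendsto_id.const_mul_atTop one_half_pos)).eventually_gt_atTop _)).exists
  set y := 2 * B * Real.exp a + 1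
  have hy : 0 < y := by positivity
  set v : ℂ := a + y * Complex.I
  have hv : v.re = a := by simp [v]
  have hvy : y ≤ ‖v + 1‖ := by
    simpa [v, abs_of_pos hy] using Complex.abs_im_le_norm (v + 1)
  have hsmall : ‖P v‖ < 1 / 2 := by
    refine lt_of_mul_lt_mul_right ?_ (Real.exp_pos (1 / 2 * a)).le
    linarith [hv ▸ hdecay v (hv ▸ ha1)]
  have hnear : ‖1 - P v‖ < 1 / 2 :=
    calc ‖1 - P v‖ ≤ B * (Real.exp a / ‖v + 1‖) := hv ▸ h1P v (by linarith)
      _ ≤ B * (Real.exp a / y) := by gcongr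
      _ < 1 / 2 := by rw [← mul_div_assoc, div_lt_iff₀ hy]; linarith
  have := norm_le_norm_add_norm_sub' (1 : ℂ) (P v)
  rw [norm_one] at this
  linarith

noncomputable def cayley (w : ℂ) : ℂ := (w - 1) / (w + 1)

theorem cayley_mem_ball {w : ℂ} (hw : 0 < w.re) : cayley w ∈ ball (0 : ℂ) 1 := by
  rw [mem_ball_zero_iff, cayley, norm_div,
    div_lt_one (norm_pos_iff.2 (add_one_ne_zero_of_re_pos hw))]
  refine lt_of_pow_lt_pow_left₀ 2 (norm_nonneg _) ?_
  simp only [Complex.sq_norm, Complex.normSq_apply, Complex.sub_re, Complex.add_re,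
    Complex.sub_im, Complex.add_im, Complex.one_re, Complex.one_im]
  nlinarith

theorem differentiableOn_cayley : DifferentiableOn ℂ cayley {w | 0 < w.re} :=
  DifferentiableOn.div (by fun_prop) (by fun_prop) fun _ hw => add_one_ne_zero_of_re_pos hw

theorem F₁_cayley {w : ℂ} (hw : 0 < w.re) : F₁ (cayley w) = 2 / (w + 1) := by
  have := add_one_ne_zero_of_re_pos hw
  simp only [F₁, cayley]
  field_simp
  ring

theorem F₂_cayley {w : ℂ} (hw : 0 < w.re) : F₂ (cayley w) = Complex.exp (-w) := by
  have := add_one_ne_zero_of_re_pos hw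
  simp only [F₂, cayley]
  congr 1
  field_simp
  ring

theorem norm_F₂_div_norm_F₁_cayley {w : ℂ} (hw : 0 < w.re) :
    ‖F₂ (cayley w)‖ / ‖F₁ (cayley w)‖ = ‖w + 1‖ / (2 * Real.exp w.re) := by
  rw [F₁_cayley hw, F₂_cayley hw, norm_div, Complex.norm_exp, Complex.neg_re, Real.exp_neg,
    Complex.norm_two]
  field_simp

theorem F₁_ne_zero_of_mem_ball {z : ℂ} (hz : z ∈ ball (0 : ℂ) 1) : F₁ z ≠ 0 := by
  intro h
  rw [F₁, sub_eq_zero] at h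
  simp [← h] at hz

theorem differentiable_F₁ : Differentiable ℂ F₁ :=
  (differentiable_const 1).sub differentiable_id

theorem differentiableOn_F₂ : DifferentiableOn ℂ F₂ (ball 0 1) := by
  intro z hz
  have : (1 : ℂ) - z ≠ 0 := F₁_ne_zero_of_mem_ball hz
  unfold F₂
  fun_prop (disch := assumption)

theorem not_differentiableOn_ball_of_norm_le_of_norm_one_sub_le {g : ℂ → ℂ} {M₁ M₂ : ℝ}
    (hM₁ : 0 ≤ M₁) (hM₂ : 0 ≤ M₂)
    (hg : ∀ z ∈ ball (0 : ℂ) 1, ‖g z‖ ≤ M₂ * (‖F₂ z‖ / ‖F₁ z‖))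
    (h1g : ∀ z ∈ ball (0 : ℂ) 1, ‖1 - g z‖ ≤ M₁ * (‖F₁ z‖ / ‖F₂ z‖)) :
    ¬ DifferentiableOn ℂ g (ball 0 1) := by
  intro hd
  refine not_differentiableOn_re_pos_of_norm_le_of_norm_one_sub_le (P := g ∘ cayley)
    (A := M₂ / 2) (B := 2 * M₁) (by positivity) (by positivity) (fun w hw => ?_)
    (fun w hw => ?_) (hd.comp differentiableOn_cayley fun _ hw => cayley_mem_ball hw)
  · calc ‖g (cayley w)‖ ≤ M₂ * (‖F₂ (cayley w)‖ / ‖F₁ (cayley w)‖) := hg _ (cayley_mem_ball hw)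
      _ = M₂ / 2 * (‖w + 1‖ / Real.exp w.re) := by rw [norm_F₂_div_norm_F₁_cayley hw]; ring
  · calc ‖1 - g (cayley w)‖ ≤ M₁ * (‖F₁ (cayley w)‖ / ‖F₂ (cayley w)‖) :=
          h1g _ (cayley_mem_ball hw)
      _ = 2 * M₁ * (Real.exp w.re / ‖w + 1‖) := by
        rw [← inv_div, norm_F₂_div_norm_F₁_cayley hw, inv_div]; ring

/-- **Counterexample from Update 9.3(a)**: with `f₁ = F₁²`, `f₂ = F₂²`, `f = F₁ F₂` on the
unit disc, one has `|f| ≤ |f₁| + |f₂|` there, yet there are no bounded analytic `h₁, h₂`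
on the disc with `f = f₁ h₁ + f₂ h₂`. -/
theorem rubel_ideal_counterexample :
    (∀ z ∈ ball (0 : ℂ) 1,
      ‖F₁ z * F₂ z‖ ≤ ‖F₁ z ^ 2‖ + ‖F₂ z ^ 2‖) ∧
    ¬ ∃ h₁ h₂ : ℂ → ℂ,
      DifferentiableOn ℂ h₁ (ball (0 : ℂ) 1) ∧ (∃ M : ℝ, ∀ z ∈ ball (0 : ℂ) 1, ‖h₁ z‖ ≤ M) ∧
      DifferentiableOn ℂ h₂ (ball (0 : ℂ) 1) ∧ (∃ M : ℝ, ∀ z ∈ ball (0 : ℂ) 1, ‖h₂ z‖ ≤ M) ∧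
      ∀ z ∈ ball (0 : ℂ) 1, F₁ z * F₂ z = F₁ z ^ 2 * h₁ z + F₂ z ^ 2 * h₂ z := by
  refine ⟨fun z _ => ?_, ?_⟩
  · rw [norm_mul, norm_pow, norm_pow]
    nlinarith [two_mul_le_add_sq ‖F₁ z‖ ‖F₂ z‖, norm_nonneg (F₁ z), norm_nonneg (F₂ z)]
  rintro ⟨h₁, h₂, -, ⟨M₁, hM₁⟩, hd₂, ⟨M₂, hM₂⟩, heq⟩
  have hsplit : ∀ z ∈ ball (0 : ℂ) 1, 1 - F₂ z * h₂ z / F₁ z = F₁ z * h₁ z / F₂ z := by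
    intro z hz
    have hF₁ := F₁_ne_zero_of_mem_ball hz
    have hF₂ : F₂ z ≠ 0 := Complex.exp_ne_zero _
    field_simp
    linear_combination heq z hz
  refine not_differentiableOn_ball_of_norm_le_of_norm_one_sub_le
    (g := fun z => F₂ z * h₂ z / F₁ z)
    ((norm_nonneg _).trans (hM₁ 0 (mem_ball_self one_pos)))
    ((norm_nonneg _).trans (hM₂ 0 (mem_ball_self one_pos))) (fun z hz => ?_) (fun z hz => ?_)
    ((differentiableOn_F₂.mul hd₂).div differentiable_F₁.differentiableOn
      fun _ hz => F₁_ne_zero_of_mem_ball hz)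
  · rw [norm_div, norm_mul, mul_comm ‖F₂ z‖, mul_div_assoc]
    exact mul_le_mul_of_nonneg_right (hM₂ z hz) (by positivity)
  · rw [hsplit z hz, norm_div, norm_mul, mul_comm ‖F₁ z‖, mul_div_assoc]
    exact mul_le_mul_of_nonneg_right (hM₁ z hz) (by positivity)
end
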